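/- arXiv:2605.18999 — 11 statements merged into one kernel-verified Lean document; each statement's English description precedes it below -/
import Mathlib

section
/- Let α ∈ (0,1), q = 1−α, and k ≥ 1 an integer. Then ∑_{i=0}^{k−1} q^{k−i}/√(i+1) ≤ q^{k/2}/α + √2·q/(α·√(k+2)). -/
open Finset Real

/-
Split the sum at `m = ⌈k/2⌉`. For `i < m` drop the factor `1/√(i+1) ≤ 1`: what remains is a
geometric tail starting at `q^(k+1-m) ≤ q^(k/2)`. For `i ≥ m` we have `k + 2 ≤ 2(i+1)`, so
`1/√(i+1) ≤ √2/√(k+2)`, and the remaining geometric sum starts at `q^1`.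
-/

theorem sum_Ico_pow_sub_le {K : Type*} [Field K] [LinearOrder K] [IsStrictOrderedRing K]
    {q : K} (hq0 : 0 ≤ q) (hq1 : q < 1) {a b k : ℕ} (hb : b ≤ k + 1) :
    ∑ i ∈ Ico a b, q ^ (k - i) ≤ q ^ (k + 1 - b) / (1 - q) := by
  rw [sum_Ico_reflect (q ^ ·) a hb]
  exact geom_sum_Ico_le_of_lt_one hq0 hq1

theorem one_div_sqrt_succ_le {i k : ℕ} (hki : k ≤ 2 * i) :
    1 / √((i : ℝ) + 1) ≤ √2 / √((k : ℝ) + 2) := by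
  have hk : ((k : ℝ) + 2) ≤ 2 * ((i : ℝ) + 1) := by
    have : (k : ℝ) ≤ 2 * i := by exact_mod_cast hki
    linarith
  rw [div_le_div_iff₀ (by positivity) (by positivity), one_mul, ← sqrt_mul zero_le_two]
  exact sqrt_le_sqrt hk

section

variable {q : ℝ} (hq0 : 0 ≤ q) (hq1 : q < 1) {k : ℕ}
include hq0 hq1

theorem sum_range_pow_sub_div_sqrt_le {m : ℕ} (hm : m ≤ k + 1) :
    ∑ i ∈ range m, q ^ (k - i) / √((i : ℝ) + 1) ≤ q ^ (k + 1 - m) / (1 - q) :=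
  calc ∑ i ∈ range m, q ^ (k - i) / √((i : ℝ) + 1)
      ≤ ∑ i ∈ range m, q ^ (k - i) := by
        refine sum_le_sum fun i _ ↦ div_le_self (pow_nonneg hq0 _) ?_
        exact one_le_sqrt.mpr (by linarith [i.cast_nonneg (α := ℝ)])
    _ ≤ q ^ (k + 1 - m) / (1 - q) := by
        rw [range_eq_Ico]
        exact sum_Ico_pow_sub_le hq0 hq1 hm

theorem sum_Ico_pow_sub_div_sqrt_le {m : ℕ} (hm : k ≤ 2 * m) :
    ∑ i ∈ Ico m k, q ^ (k - i) / √((i : ℝ) + 1) ≤ q / (1 - q) * (√2 / √((k : ℝ) + 2)) :=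
  calc ∑ i ∈ Ico m k, q ^ (k - i) / √((i : ℝ) + 1)
      ≤ ∑ i ∈ Ico m k, q ^ (k - i) * (√2 / √((k : ℝ) + 2)) := by
        refine sum_le_sum fun i hi ↦ ?_
        have hki : k ≤ 2 * i := hm.trans (Nat.mul_le_mul_left 2 (mem_Ico.mp hi).1)
        rw [div_eq_mul_one_div]
        exact mul_le_mul_of_nonneg_left (one_div_sqrt_succ_le hki) (pow_nonneg hq0 _)
    _ ≤ q / (1 - q) * (√2 / √((k : ℝ) + 2)) := by
        rw [← sum_mul]
        gcongr
        simpa using sum_Ico_pow_sub_le hq0 hq1 (a := m) k.le_succ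

end

theorem stmt_0_general (α : ℝ) (hα : α ∈ Set.Ioo (0:ℝ) 1) (q : ℝ) (hq : q = 1 - α)
    (k : ℕ) :
    ∑ i ∈ Finset.range k, q ^ (k - i) / Real.sqrt (i + 1)
      ≤ q ^ ((k : ℝ) / 2) / α + Real.sqrt 2 * q / (α * Real.sqrt (k + 2)) := by
  obtain ⟨hα0, hα1⟩ := hα
  have hq0 : 0 ≤ q := by linarith
  have hq1 : q < 1 := by linarith
  have h1q : 1 - q = α := by linarith
  set m := (k + 1) / 2
  have hexp : q ^ (k + 1 - m) ≤ q ^ ((k : ℝ) / 2) := by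
    rw [← rpow_natCast]
    refine rpow_le_rpow_of_exponent_ge' hq0 hq1.le (by positivity) ?_
    rw [Nat.cast_sub (by omega)]
    have : 2 * (m : ℝ) ≤ k + 1 := by exact_mod_cast (by omega : 2 * m ≤ k + 1)
    push_cast
    linarith
  rw [← sum_range_add_sum_Ico _ (by omega : m ≤ k)]
  calc _ ≤ q ^ (k + 1 - m) / (1 - q) + q / (1 - q) * (√2 / √((k : ℝ) + 2)) :=
        add_le_add (sum_range_pow_sub_div_sqrt_le hq0 hq1 (by omega))
          (sum_Ico_pow_sub_div_sqrt_le hq0 hq1 (by omega))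
    _ ≤ q ^ ((k : ℝ) / 2) / α + √2 * q / (α * √((k : ℝ) + 2)) := by
        rw [h1q, div_mul_div_comm, mul_comm q]
        gcongr

theorem stmt_0 (α : ℝ) (hα : α ∈ Set.Ioo (0:ℝ) 1) (q : ℝ) (hq : q = 1 - α)
    (k : ℕ) (hk : 1 ≤ k) :
    ∑ i ∈ Finset.range k, q ^ (k - i) / Real.sqrt (i + 1)
      ≤ q ^ ((k : ℝ) / 2) / α + Real.sqrt 2 * q / (α * Real.sqrt (k + 2)) :=
  stmt_0_general α hα q hq k
end

section
/- Let a ∈ (0,1) and t ≥ 0 an integer. Then ∑_{k=0}^{t} a^k/√(k+1) ≤ 1 + (1/a)·√(π/log(1/a)). -/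
/-!
Apart from the term `k = 0`, the sum is a right Riemann sum of the nonincreasing function
`x ↦ a^x/√(x+1)`, hence at most its integral over `(0, ∞)`. Writing `a^x = exp (-λx)` with
`λ = log (1/a)` and bounding `√(x+1) ≥ √x`, that integral is at most
`∫₀^∞ x^(-1/2) e^(-λx) dx = Γ(1/2)/√λ = √(π/λ)`, and `1 ≤ 1/a`.
-/

open Real Set MeasureTheory

namespace Real

lemma integrableOn_rpow_neg_half_mul_exp_neg_mul {b : ℝ} (hb : 0 < b) :
    IntegrableOn (fun x : ℝ => x ^ (-(1 / 2) : ℝ) * exp (-(b * x))) (Ioi 0) := by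
  simpa [neg_mul] using
    integrableOn_rpow_mul_exp_neg_mul_rpow (by norm_num : (-1 : ℝ) < -(1 / 2)) one_pos hb

lemma integral_rpow_neg_half_mul_exp_neg_mul {b : ℝ} (hb : 0 < b) :
    ∫ x in Ioi 0, x ^ (-(1 / 2) : ℝ) * exp (-(b * x)) = √(π / b) := by
  have h := integral_rpow_mul_exp_neg_mul_Ioi (by norm_num : (0 : ℝ) < 1 / 2) hb
  rwa [show (1 / 2 : ℝ) - 1 = -(1 / 2) by norm_num, Gamma_one_half_eq, ← sqrt_eq_rpow,
    ← sqrt_mul (by positivity), one_div_mul_eq_div] at h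

lemma antitoneOn_rpow_div_sqrt_add_one {a : ℝ} (ha0 : 0 < a) (ha1 : a ≤ 1) :
    AntitoneOn (fun x : ℝ => a ^ x / √(x + 1)) (Ici 0) := by
  intro x hx y hy hxy
  have hx : (0 : ℝ) ≤ x := hx
  exact div_le_div₀ (by positivity) (rpow_le_rpow_of_exponent_ge ha0 ha1 hxy)
    (sqrt_pos.mpr (by linarith)) (sqrt_le_sqrt (by linarith))

lemma rpow_div_sqrt_add_one_le {a x : ℝ} (ha : 0 < a) (hx : 0 < x) :
    a ^ x / √(x + 1) ≤ x ^ (-(1 / 2) : ℝ) * exp (-(log (1 / a) * x)) := by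
  have hpow : a ^ x = exp (-(log (1 / a) * x)) := by
    rw [rpow_def_of_pos ha, one_div, log_inv, neg_mul, neg_neg]
  rw [hpow, rpow_neg hx.le, ← sqrt_eq_rpow, div_eq_mul_inv, mul_comm]
  gcongr
  linarith

end Real

open Finset

theorem stmt_1 (a : ℝ) (ha : a ∈ Set.Ioo (0:ℝ) 1) (t : ℕ) :
    ∑ k ∈ Finset.range (t + 1), a ^ k / Real.sqrt (k + 1)
      ≤ 1 + (1 / a) * Real.sqrt (Real.pi / Real.log (1 / a)) := by
  obtain ⟨ha0, ha1⟩ := ha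
  have hlog : 0 < log (1 / a) := log_pos (one_lt_one_div ha0 ha1)
  set f : ℝ → ℝ := fun x => a ^ x / √(x + 1)
  set g : ℝ → ℝ := fun x => x ^ (-(1 / 2) : ℝ) * exp (-(log (1 / a) * x))
  have hfg (x : ℝ) (hx : x ∈ Set.Ioi 0) : f x ≤ g x := rpow_div_sqrt_add_one_le ha0 hx
  have hf_nonneg (x : ℝ) (hx : x ∈ Set.Ioi 0) : 0 ≤ f x := by positivity
  have hg_int := integrableOn_rpow_neg_half_mul_exp_neg_mul hlog
  have hf_int : IntegrableOn f (Set.Ioi 0) := by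
    refine hg_int.mono' (by fun_prop) ((ae_restrict_mem measurableSet_Ioi).mono fun x hx => ?_)
    rw [norm_of_nonneg (hf_nonneg x hx)]
    exact hfg x hx
  calc ∑ k ∈ range (t + 1), a ^ k / √(k + 1)
      = f 0 + ∑ k ∈ range t, f ((k + 1 : ℕ)) := by
        rw [sum_range_succ']
        simp [f, add_comm, ← rpow_natCast]
    _ ≤ 1 + ∫ x in Set.Ioi 0, f x := by
        have hf_anti : AntitoneOn f (Icc 0 t) :=
          (antitoneOn_rpow_div_sqrt_add_one ha0 ha1.le).mono Icc_subset_Ici_self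
        have hf_zero : f 0 = 1 := by simp [f]
        rw [hf_zero]
        gcongr 1 + ?_
        exact hf_anti.sum_range_le_integral hf_int hf_nonneg
    _ ≤ 1 + ∫ x in Set.Ioi 0, g x := by
        gcongr 1 + ?_
        exact setIntegral_mono_on hf_int hg_int measurableSet_Ioi hfg
    _ = 1 + √(π / log (1 / a)) := by rw [integral_rpow_neg_half_mul_exp_neg_mul hlog]
    _ ≤ 1 + (1 / a) * √(π / log (1 / a)) := by
        gcongr
        exact le_mul_of_one_le_left (sqrt_nonneg _) (one_le_one_div ha0 ha1.le)
end

section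
/- Let (a_i)_{i=0}^{T+1} be a positive nondecreasing real sequence and T ≥ 1 an integer. Then min_{1 ≤ k ≤ T} a_{k+1}/(∑_{i=1}^{k} a_i) ≤ (1/T)·(a_{T+1}/a_0)^{1/T}·log(e·a_{T+1}/a_0). -/
/-!
Write `S k = ∑_{i=1}^k a_i`, `a_{T+1} / a_0 = e^m` and `c = e^{m/T} (1 + m) / T`, the right-hand side.
If every ratio `a_{k+1} / S_k` exceeded `c`, the partial sums would grow by the factor `1 + c` at
each step, and `S_k ≥ k a_0` would give `a_{T+1} > c S_T ≥ c k (1 + c)^{T-k} a_0` for every `k`.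
This is impossible for `k = 1` when `T ≤ 1 + m`, and otherwise for `k = ⌈T / (1 + m)⌉`, close to
the maximiser `1 / c` of `k ↦ k (1 + c)^{T-k}`: there it reduces, through the Padé bound
`log (1 + x) ≥ 2x / (x + 2)`, to a polynomial inequality.
-/

open Finset Real

lemma pow_mul_le_of_forall_mul_le {s : ℕ → ℝ} {r : ℝ} (hr : 0 ≤ r) {k n : ℕ} (hkn : k ≤ n)
    (h : ∀ i, k ≤ i → i < n → r * s i ≤ s (i + 1)) :
    r ^ (n - k) * s k ≤ s n := by
  induction n, hkn using Nat.le_induction with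
  | base => simp
  | succ n hkn ih =>
    calc r ^ (n + 1 - k) * s k = r * (r ^ (n - k) * s k) := by
          rw [Nat.sub_add_comm hkn, pow_succ']; ring
      _ ≤ r * s n := by gcongr; exact ih fun i hki hin ↦ h i hki (by omega)
      _ ≤ s (n + 1) := h n hkn (by omega)

lemma pow_mul_card_mul_le_sum_Icc {a : ℕ → ℝ} {c : ℝ} (hc : 0 ≤ c) {k n : ℕ} (hkn : k ≤ n)
    (ha : ∀ i ∈ Icc 1 k, a 0 ≤ a i)
    (hgap : ∀ i, k ≤ i → i < n → c * ∑ j ∈ Icc 1 i, a j ≤ a (i + 1)) :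
    (1 + c) ^ (n - k) * (k * a 0) ≤ ∑ i ∈ Icc 1 n, a i := by
  have hsum : (k : ℝ) * a 0 ≤ ∑ i ∈ Icc 1 k, a i := by
    simpa using card_nsmul_le_sum (Icc 1 k) a (a 0) ha
  refine (mul_le_mul_of_nonneg_left hsum (by positivity)).trans ?_
  refine pow_mul_le_of_forall_mul_le (s := fun i ↦ ∑ j ∈ Icc 1 i, a j) (by linarith) hkn
    fun i hki hin ↦ ?_
  rw [sum_Icc_succ_top (by omega)]
  linarith [hgap i hki hin]

/-- With `t = 1/T`, `u = (1 + m)/T`, `d = (1 + m)k/T - 1` and `c₀ = u (1 + u - t)`, this is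
`m - m/T ≤ 2d/(d + 2) + (T - k) · 2c₀/(c₀ + 2)`, scaled by `t`. -/
lemma pade_sum_ge {u t d : ℝ} (ht : 0 ≤ t) (htu : t ≤ u) (hu : u ≤ 1) (hd : 0 ≤ d)
    (hdu : d ≤ u) :
    (u - t) * (1 - t) ≤
      t * (2 * d / (d + 2)) + (u - t - t * d) * (2 * (1 + u - t) / (u * (1 + u - t) + 2)) := by
  have hut : 0 ≤ u - t := by linarith
  have hud : 0 ≤ u - d := by linarith
  have hu0 : 0 ≤ u := by linarith
  have hc : 0 < u * (1 + u - t) + 2 := by nlinarith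
  rw [mul_div_assoc', mul_div_assoc', div_add_div _ _ (by positivity) hc.ne',
    le_div_iff₀ (by positivity)]
  have hZ : 0 ≤ (u - t) * (1 - u + t * (u - t)) := mul_nonneg hut (by nlinarith)
  -- the cleared difference is exactly the sum of these four nonnegative terms
  linarith [mul_nonneg (by positivity : 0 ≤ 2 * u + d * u) hZ,
    mul_nonneg (mul_nonneg (mul_nonneg hd hu0) ht) hut,
    mul_nonneg (mul_nonneg (mul_nonneg hd ht) (by linarith : 0 ≤ 1 + u - t)) hud,
    mul_nonneg (mul_nonneg ht hut) hud]

lemma exp_le_mul_mul_pow_of_one_add_le {T k : ℕ} {m c : ℝ} (hm : 0 ≤ m) (hmT : 1 + m ≤ T)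
    (hk : (T : ℝ) ≤ (1 + m) * k) (hk' : (1 + m) * k ≤ T + (1 + m)) (hkT : k ≤ T)
    (hc : exp (m / T) * (1 + m) / T ≤ c) :
    exp m ≤ c * k * (1 + c) ^ (T - k) := by
  have hT : (0 : ℝ) < T := by linarith
  set d := (1 + m) * k / T - 1 with hd
  set c₀ := (1 + m) / T * (1 + (1 + m) / T - 1 / T) with hc₀
  have hd0 : 0 ≤ d := by rw [hd, sub_nonneg, le_div_iff₀ hT]; linarith
  have hdu : d ≤ (1 + m) / T := by
    rw [hd, sub_le_iff_le_add, div_add_one hT.ne', div_le_div_iff_of_pos_right hT]; linarith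
  have hc₀m : c₀ = (1 + m / T) * (1 + m) / T := by rw [hc₀]; field_simp; ring
  have hc₀0 : 0 ≤ c₀ := by rw [hc₀m]; positivity
  have hc₀c : c₀ ≤ c := by
    refine le_trans ?_ hc
    rw [hc₀m, add_comm 1]
    gcongr
    exact add_one_le_exp _
  have hck : exp (m / T) * (1 + d) ≤ c * k := by
    calc exp (m / T) * (1 + d) = exp (m / T) * (1 + m) / T * k := by rw [hd]; ring
      _ ≤ c * k := by gcongr
  have hlog : m ≤ m / T + log (1 + d) + ((T - k : ℕ) : ℝ) * log (1 + c₀) := by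
    have h := pade_sum_ge (u := (1 + m) / T) (t := 1 / T) (by positivity) (by gcongr; linarith)
      (by rw [div_le_one hT]; exact hmT) hd0 hdu
    have hkey : m - m / T ≤ 2 * d / (d + 2) + ((T - k : ℕ) : ℝ) * (2 * c₀ / (c₀ + 2)) :=
      calc m - m / T = T * (((1 + m) / T - 1 / T) * (1 - 1 / T)) := by field_simp; ring
        _ ≤ T * _ := mul_le_mul_of_nonneg_left h hT.le
        _ = _ := by rw [Nat.cast_sub hkT, hc₀, hd]; field_simp; ring
    have h1 := le_log_one_add_of_nonneg hd0
    have h2 := mul_le_mul_of_nonneg_left (le_log_one_add_of_nonneg hc₀0) (Nat.cast_nonneg (T - k))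
    linarith
  calc exp m ≤ exp (m / T + log (1 + d) + ((T - k : ℕ) : ℝ) * log (1 + c₀)) := exp_le_exp.2 hlog
    _ = exp (m / T) * (1 + d) * (1 + c₀) ^ (T - k) := by
      rw [exp_add, exp_add, exp_log (by linarith), exp_nat_mul, exp_log (by linarith)]
    _ ≤ c * k * (1 + c) ^ (T - k) :=
      mul_le_mul hck (by gcongr) (by positivity) ((by positivity : (0 : ℝ) ≤ _).trans hck)

lemma exp_le_mul_pow_of_le_one_add {T : ℕ} {m c : ℝ} (hT : 1 ≤ T) (hTm : (T : ℝ) ≤ 1 + m)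
    (hc : exp (m / T) * (1 + m) / T ≤ c) :
    exp m ≤ c * (1 + c) ^ (T - 1) := by
  have hT0 : (0 : ℝ) < T := by exact_mod_cast hT
  have hm0 : 0 ≤ m := by linarith [(by exact_mod_cast hT : (1 : ℝ) ≤ T)]
  have hu : 1 ≤ (1 + m) / T := (one_le_div hT0).2 hTm
  have hc1 : 1 ≤ c := by
    calc (1 : ℝ) ≤ exp (m / T) * ((1 + m) / T) :=
          one_le_mul_of_one_le_of_one_le (one_le_exp (by positivity)) hu
      _ ≤ c := by rwa [← mul_div_assoc]
  calc exp m = exp (m / T) ^ T * 1 := by rw [← exp_nat_mul, mul_div_cancel₀ _ hT0.ne', mul_one]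
    _ ≤ exp (m / T) ^ T * ((1 + m) / T) ^ T := by gcongr; exact one_le_pow₀ hu
    _ ≤ c ^ T := by rw [← mul_pow, ← mul_div_assoc]; gcongr
    _ = c * c ^ (T - 1) := by rw [← pow_succ', Nat.sub_add_cancel hT]
    _ ≤ c * (1 + c) ^ (T - 1) := by gcongr; linarith

lemma exists_exp_le_mul_mul_pow {T : ℕ} {m c : ℝ} (hT : 1 ≤ T) (hm : 0 ≤ m)
    (hc : exp (m / T) * (1 + m) / T ≤ c) :
    ∃ k, 1 ≤ k ∧ k ≤ T ∧ exp m ≤ c * k * (1 + c) ^ (T - k) := by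
  rcases le_total (T : ℝ) (1 + m) with hTm | hmT
  · exact ⟨1, le_rfl, hT, by simpa using exp_le_mul_pow_of_le_one_add hT hTm hc⟩
  have hT0 : (0 : ℝ) < T := by exact_mod_cast hT
  have hm1 : 0 < 1 + m := by linarith
  set k := ⌈T / (1 + m)⌉₊
  have hk : (T : ℝ) ≤ (1 + m) * k := by
    rw [mul_comm, ← div_le_iff₀ hm1]; exact Nat.le_ceil _
  have hk' : (1 + m) * k ≤ T + (1 + m) := by
    rw [mul_comm, ← le_div_iff₀ hm1, add_div, div_self hm1.ne']
    exact (Nat.ceil_lt_add_one (by positivity)).le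
  have hkT : k ≤ T := Nat.ceil_le.2 (div_le_self hT0.le (by linarith))
  exact ⟨k, Nat.ceil_pos.2 (by positivity), hkT,
    exp_le_mul_mul_pow_of_one_add_le hm hmT hk hk' hkT hc⟩

theorem stmt_2 (T : ℕ) (hT : 1 ≤ T) (a : ℕ → ℝ)
    (hpos : ∀ i ≤ T + 1, 0 < a i)
    (hmono : ∀ i j, i ≤ j → j ≤ T + 1 → a i ≤ a j) :
    ∃ k, 1 ≤ k ∧ k ≤ T ∧
      a (k + 1) / (∑ i ∈ Finset.Icc 1 k, a i)
        ≤ (1 / T) * (a (T + 1) / a 0) ^ ((1 : ℝ) / T)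
            * Real.log (Real.exp 1 * a (T + 1) / a 0) := by
  have ha0 : 0 < a 0 := hpos 0 (by omega)
  have hQ : 1 ≤ a (T + 1) / a 0 := (one_le_div ha0).2 (hmono 0 (T + 1) (by omega) le_rfl)
  set m := log (a (T + 1) / a 0) with hm
  have hm0 : 0 ≤ m := log_nonneg hQ
  set c := exp (m / T) * (1 + m) / T with hc
  have hc0 : 0 ≤ c := by positivity
  have hbound : (1 / T) * (a (T + 1) / a 0) ^ ((1 : ℝ) / T)
      * log (exp 1 * a (T + 1) / a 0) = c := by
    rw [rpow_def_of_pos (by linarith), mul_div_assoc, log_mul (exp_ne_zero 1) (by positivity),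
      log_exp, ← hm, hc]
    ring_nf
  rw [hbound]
  obtain ⟨k, hk1, hkT, hexp⟩ := exists_exp_le_mul_mul_pow hT hm0 le_rfl
  by_contra! hgap
  have hgap' (i : ℕ) (hi : 1 ≤ i) (hiT : i ≤ T) : c * ∑ j ∈ Icc 1 i, a j < a (i + 1) := by
    refine (lt_div_iff₀ (sum_pos (fun j hj ↦ hpos j ?_) ?_)).1 (hgap i hi hiT)
    · simp only [mem_Icc] at hj; omega
    · exact ⟨1, by simp [hi]⟩
  have hgrowth := pow_mul_card_mul_le_sum_Icc (a := a) (c := c) hc0 hkT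
    (fun i hi ↦ hmono 0 i (by omega) (by simp only [mem_Icc] at hi; omega))
    (fun i hki hiT ↦ (hgap' i (by omega) hiT.le).le)
  have hQc : a (T + 1) ≤ c * ((1 + c) ^ (T - k) * (k * a 0)) := by
    rw [exp_log (by linarith), div_le_iff₀ ha0] at hexp
    linarith
  linarith [hgap' T hT le_rfl, mul_le_mul_of_nonneg_left hgrowth hc0]
end

section
/- Let (r_i)_{i=0}^{T+1} be a positive nondecreasing real sequence and T ≥ 2 an integer. Then min over k in {⌊T/2⌋+1, …, T} of r_{k+1}/(∑_{i=1}^{k} r_i) ≤ (2/T)·(r_{T+1}/r_0)^{2/T}·log(e·r_{T+1}/r_0). -/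
/-!
Write `S k = ∑_{i=1}^k r i`, `R = r (T+1) / r 0`, `θ = 2/T` and let `c` be the right-hand side.
If every ratio `r (k+1) / S k` with `T/2 < k ≤ T` exceeded `c`, the partial sums would grow by
the factor `1 + c` over the last `n = T - ⌊T/2⌋ - 1` steps, and since `S (⌊T/2⌋+1) ≥ (⌊T/2⌋+1) r 0`
this forces `R > c (⌊T/2⌋+1) (1+c)^n`. But `1 + c ≥ R^θ` (from `(1 - v) eᵛ ≤ 1`), and
`θ (⌊T/2⌋+1) ≥ 1`, `θ (n+1) ≥ 1`, so `c (⌊T/2⌋+1) (1+c)^n ≥ R^{θ(n+1)} ≥ R`.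
-/

open Finset Real

theorem pow_mul_le_of_mul_le_succ {α : Type*} [Semiring α] [PartialOrder α] [IsOrderedRing α]
    {S : ℕ → α} {q : α} (hq : 0 ≤ q) {m n : ℕ}
    (h : ∀ k < n, q * S (m + k) ≤ S (m + k + 1)) : q ^ n * S m ≤ S (m + n) := by
  induction n with
  | zero => simp
  | succ n ih =>
    calc q ^ (n + 1) * S m = q * (q ^ n * S m) := by rw [pow_succ', mul_assoc]
      _ ≤ q * S (m + n) := mul_le_mul_of_nonneg_left (ih fun k hk => h k (by omega)) hq
      _ ≤ S (m + (n + 1)) := h n n.lt_succ_self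

theorem natCast_mul_le_sum_Icc {α : Type*} [Semiring α] [PartialOrder α] [IsOrderedAddMonoid α]
    {a : ℕ → α} {m : ℕ} (ha : ∀ i ≤ m, a 0 ≤ a i) : (m : α) * a 0 ≤ ∑ i ∈ Icc 1 m, a i := by
  have := card_nsmul_le_sum (Icc 1 m) a (a 0) fun i hi => ha i (mem_Icc.1 hi).2
  rwa [Nat.card_Icc, Nat.add_sub_cancel, nsmul_eq_mul] at this

theorem exists_succ_div_sum_Icc_le {a : ℕ → ℝ} {m n : ℕ} {c : ℝ} (hm : 1 ≤ m)
    (ha : ∀ i ≤ m + n, 0 < a i) (hc : 0 ≤ c)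
    (hlast : a (m + n + 1) ≤ c * (1 + c) ^ n * ∑ i ∈ Icc 1 m, a i) :
    ∃ k, m ≤ k ∧ k ≤ m + n ∧ a (k + 1) / ∑ i ∈ Icc 1 k, a i ≤ c := by
  by_contra! hratio
  have hjump : ∀ k, m ≤ k → k ≤ m + n → c * ∑ i ∈ Icc 1 k, a i < a (k + 1) := by
    intro k hmk hkn
    have hsum : 0 < ∑ i ∈ Icc 1 k, a i :=
      sum_pos (fun i hi => ha i ((mem_Icc.1 hi).2.trans hkn)) ⟨1, mem_Icc.2 ⟨le_rfl, by omega⟩⟩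
    exact (lt_div_iff₀ hsum).1 (hratio k hmk hkn)
  have hgrow : (1 + c) ^ n * ∑ i ∈ Icc 1 m, a i ≤ ∑ i ∈ Icc 1 (m + n), a i := by
    refine pow_mul_le_of_mul_le_succ (S := fun k => ∑ i ∈ Icc 1 k, a i) (by linarith) fun k hk => ?_
    rw [sum_Icc_succ_top (by omega)]
    linarith [hjump (m + k) (by omega) (by omega)]
  have := hjump (m + n) (by omega) le_rfl
  nlinarith [mul_le_mul_of_nonneg_left hgrow hc]

noncomputable def radiusRatioBound (θ R : ℝ) : ℝ := θ * R ^ θ * log (exp 1 * R)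

theorem radiusRatioBound_nonneg {θ R : ℝ} (hθ : 0 ≤ θ) (hR : 1 ≤ R) : 0 ≤ radiusRatioBound θ R :=
  mul_nonneg (by positivity) (log_nonneg (by nlinarith [add_one_le_exp 1]))

theorem rpow_le_one_add_radiusRatioBound {θ R : ℝ} (hθ : 0 ≤ θ) (hR : 0 < R) :
    R ^ θ ≤ 1 + radiusRatioBound θ R := by
  set v := log R * θ
  have hRv : R ^ θ = exp v := rpow_def_of_pos hR θ
  have hbound : radiusRatioBound θ R = θ * exp v + v * exp v := by
    rw [radiusRatioBound, log_mul (exp_ne_zero 1) hR.ne', log_exp, hRv]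
    ring
  have hv : (1 - v) * exp v ≤ 1 := by
    calc (1 - v) * exp v ≤ exp (-v) * exp v :=
          mul_le_mul_of_nonneg_right (one_sub_le_exp_neg v) (exp_pos v).le
      _ = 1 := by rw [← exp_add, neg_add_cancel, exp_zero]
  rw [hRv, hbound]
  nlinarith [exp_pos v]

theorem le_mul_radiusRatioBound_mul_pow {θ R m : ℝ} {n : ℕ} (hR : 1 ≤ R) (hθ : 0 ≤ θ)
    (hm : 1 ≤ θ * m) (hn : 1 ≤ θ * (n + 1)) :
    R ≤ m * radiusRatioBound θ R * (1 + radiusRatioBound θ R) ^ n := by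
  have hR0 : 0 < R := by linarith
  have hlog : 1 ≤ log (exp 1 * R) := by
    rw [log_mul (exp_ne_zero 1) hR0.ne', log_exp]
    linarith [log_nonneg hR]
  have hfirst : R ^ θ ≤ m * radiusRatioBound θ R := by
    calc R ^ θ ≤ θ * m * R ^ θ * log (exp 1 * R) := by
          nlinarith [rpow_nonneg hR0.le θ, mul_le_mul hm hlog zero_le_one (by linarith)]
      _ = m * radiusRatioBound θ R := by rw [radiusRatioBound]; ring
  calc R ≤ R ^ (θ * (n + 1)) := self_le_rpow_of_one_le hR hn
    _ = R ^ θ * (R ^ θ) ^ n := by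
        rw [mul_add_one, rpow_add hR0, rpow_mul_natCast hR0.le, mul_comm]
    _ ≤ m * radiusRatioBound θ R * (1 + radiusRatioBound θ R) ^ n :=
        mul_le_mul hfirst (pow_le_pow_left₀ (rpow_nonneg hR0.le θ)
          (rpow_le_one_add_radiusRatioBound hθ hR0) n) (by positivity)
          (by linarith [rpow_pos_of_pos hR0 θ])

theorem stmt_3 (T : ℕ) (hT : 2 ≤ T) (r : ℕ → ℝ)
    (hpos : ∀ i ≤ T + 1, 0 < r i)
    (hmono : ∀ i j, i ≤ j → j ≤ T + 1 → r i ≤ r j) :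
    ∃ k, T / 2 + 1 ≤ k ∧ k ≤ T ∧
      r (k + 1) / (∑ i ∈ Finset.Icc 1 k, r i)
        ≤ (2 / T) * (r (T + 1) / r 0) ^ ((2 : ℝ) / T)
            * Real.log (Real.exp 1 * r (T + 1) / r 0) := by
  obtain ⟨n, hn⟩ : ∃ n, T / 2 + 1 + n = T := ⟨T - T / 2 - 1, by omega⟩
  have hr0 : 0 < r 0 := hpos 0 (by omega)
  have hR : 1 ≤ r (T + 1) / r 0 := (one_le_div hr0).2 (hmono 0 (T + 1) (by omega) le_rfl)
  have hθ : (0 : ℝ) ≤ 2 / T := by positivity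
  have hθm : 1 ≤ (2 : ℝ) / T * ((T / 2 + 1 : ℕ) : ℝ) := by
    rw [div_mul_eq_mul_div, one_le_div (by positivity)]
    exact_mod_cast (by omega : T ≤ 2 * (T / 2 + 1))
  have hθn : 1 ≤ (2 : ℝ) / T * (n + 1) := by
    rw [div_mul_eq_mul_div, one_le_div (by positivity)]
    exact_mod_cast (by omega : T ≤ 2 * (n + 1))
  set c := radiusRatioBound (2 / T) (r (T + 1) / r 0)
  have hc : 0 ≤ c := radiusRatioBound_nonneg hθ hR
  obtain ⟨k, hk₁, hk₂, hk⟩ := exists_succ_div_sum_Icc_le (a := r) (m := T / 2 + 1) (n := n) (c := c)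
    (by omega) (fun i hi => hpos i (by omega)) hc <| by
    rw [hn]
    calc r (T + 1) = r (T + 1) / r 0 * r 0 := (div_mul_cancel₀ _ hr0.ne').symm
      _ ≤ (T / 2 + 1 : ℕ) * c * (1 + c) ^ n * r 0 :=
          mul_le_mul_of_nonneg_right (le_mul_radiusRatioBound_mul_pow hR hθ hθm hθn) hr0.le
      _ = c * (1 + c) ^ n * ((T / 2 + 1 : ℕ) * r 0) := by ring
      _ ≤ c * (1 + c) ^ n * ∑ i ∈ Icc 1 (T / 2 + 1), r i :=
          mul_le_mul_of_nonneg_left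
            (natCast_mul_le_sum_Icc fun i hi => hmono 0 i (by omega) (by omega)) (by positivity)
  exact ⟨k, hk₁, by omega, by rwa [mul_div_assoc]⟩
end

section
/- Let E be a finite-dimensional real normed space with norm ‖·‖ and dual norm ‖g‖_* = sup_{‖u‖≤1} ⟨g,u⟩. Let η ≥ 0, let Ψ : E → ℝ be differentiable, and let z₊ minimize Ψ over the ball {x : ‖x − z‖ ≤ η}. Then ⟨∇Ψ(z₊), z − z₊⟩ = η·‖∇Ψ(z₊)‖_*. -/
/-!
First-order optimality at the minimizer `zp` of `Ψ` on the ball `B = closedBall z η` says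
`Ψ'(zp) (x - zp) ≥ 0` for every `x ∈ B`. Taking `x = z - v` with `‖v‖ ≤ η` gives
`η ‖Ψ'(zp)‖ ≤ Ψ'(zp) (z - zp)`, and Hölder's inequality `Ψ'(zp) (z - zp) ≤ ‖Ψ'(zp)‖ ‖z - zp‖`
gives the reverse bound.
-/

open Metric

section

variable {E : Type*} [NormedAddCommGroup E] [NormedSpace ℝ E]

theorem IsMinOn.hasFDerivWithinAt_apply_sub_nonneg {f : E → ℝ} {f' : E →L[ℝ] ℝ} {s : Set E}
    {a x : E} (hmin : IsMinOn f s a) (hs : Convex ℝ s) (ha : a ∈ s) (hx : x ∈ s)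
    (hf : HasFDerivWithinAt f f' s a) : 0 ≤ f' (x - a) :=
  hmin.localize.hasFDerivWithinAt_nonneg hf
    (sub_mem_posTangentConeAt_of_segment_subset (hs.segment_subset ha hx))

namespace ContinuousLinearMap

theorem mul_norm_le_of_forall_norm_le_imp_apply_le (f : E →L[ℝ] ℝ) {r c : ℝ} (hr : 0 ≤ r)
    (h : ∀ v, ‖v‖ ≤ r → f v ≤ c) : r * ‖f‖ ≤ c := by
  have hc : 0 ≤ c := by simpa using h 0 (by simpa using hr)
  rcases hr.eq_or_lt with rfl | hr
  · simpa using hc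
  rw [← le_div_iff₀' hr]
  refine opNorm_le_of_unit_norm (div_nonneg hc hr.le) fun x hx => ?_
  have hrx : ‖r • x‖ ≤ r := by simp [norm_smul, hx, abs_of_pos hr]
  have hpos : r * f x ≤ c := by simpa using h (r • x) hrx
  have hneg : -(r * f x) ≤ c := by simpa using h (-(r • x)) (by rwa [norm_neg])
  have hbound : |r * f x| ≤ c := abs_le.2 ⟨by linarith, hpos⟩
  rwa [Real.norm_eq_abs, le_div_iff₀' hr, ← abs_of_pos hr, ← abs_mul]

theorem apply_sub_eq_mul_norm_of_forall_closedBall_nonneg (f : E →L[ℝ] ℝ) {z a : E} {η : ℝ}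
    (ha : ‖a - z‖ ≤ η) (h : ∀ x ∈ closedBall z η, 0 ≤ f (x - a)) : f (z - a) = η * ‖f‖ := by
  refine le_antisymm ?_ ?_
  · calc f (z - a) ≤ ‖f (z - a)‖ := le_abs_self _
      _ ≤ ‖f‖ * η := f.le_opNorm_of_le (by rwa [norm_sub_rev])
      _ = η * ‖f‖ := mul_comm _ _
  · refine f.mul_norm_le_of_forall_norm_le_imp_apply_le ((norm_nonneg _).trans ha) fun v hv => ?_
    have := h (z - v) (by simpa [mem_closedBall_iff_norm] using hv)
    rw [show z - v - a = (z - a) - v by abel, map_sub] at this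
    linarith

end ContinuousLinearMap

end

theorem stmt_4_general {E : Type*} [NormedAddCommGroup E] [NormedSpace ℝ E]
    (η : ℝ) (Ψ : E → ℝ) (Ψ' : E → (E →L[ℝ] ℝ))
    (hdiff : ∀ x, HasFDerivAt Ψ (Ψ' x) x)
    (z zp : E) (hzp_mem : ‖zp - z‖ ≤ η)
    (hmin : ∀ x, ‖x - z‖ ≤ η → Ψ zp ≤ Ψ x) :
    (Ψ' zp) (z - zp) = η * ‖Ψ' zp‖ := by
  have hmem : ∀ {x}, x ∈ closedBall z η ↔ ‖x - z‖ ≤ η := mem_closedBall_iff_norm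
  have hminOn : IsMinOn Ψ (closedBall z η) zp := fun x hx => hmin x (hmem.1 hx)
  refine (Ψ' zp).apply_sub_eq_mul_norm_of_forall_closedBall_nonneg hzp_mem fun x hx => ?_
  exact hminOn.hasFDerivWithinAt_apply_sub_nonneg (convex_closedBall z η) (hmem.2 hzp_mem) hx
    (hdiff zp).hasFDerivWithinAt

theorem stmt_4 {E : Type*} [NormedAddCommGroup E] [NormedSpace ℝ E]
    [FiniteDimensional ℝ E]
    (η : ℝ) (hη : 0 ≤ η) (Ψ : E → ℝ) (Ψ' : E → (E →L[ℝ] ℝ))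
    (hdiff : ∀ x, HasFDerivAt Ψ (Ψ' x) x)
    (z zp : E) (hzp_mem : ‖zp - z‖ ≤ η)
    (hmin : ∀ x, ‖x - z‖ ≤ η → Ψ zp ≤ Ψ x) :
    (Ψ' zp) (z - zp) = η * ‖Ψ' zp‖ :=
  stmt_4_general η Ψ Ψ' hdiff z zp hzp_mem hmin
end

section
/- Let f : E → ℝ be L-smooth (‖∇f(y) − ∇f(x)‖_* ≤ L‖y − x‖, hence f(y) ≤ f(x) + ⟨∇f(x), y−x⟩ + (L/2)‖y−x‖²) with L > 0. Let g = ∇f(x), m ∈ E, e = ‖g − m‖_*, a = max{‖m‖_* − e, 0}, u ∈ argmax_{‖u‖≤1} ⟨m, u⟩, η = a/L, and x₊ = x − η·u. Then f(x₊) ≤ f(x) − a²/(2L). -/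
/-!
Lipschitz continuity of `f'` gives the descent lemma
`f (x - η • u) ≤ f x - η * f' x u + L / 2 * η ^ 2` for `‖u‖ ≤ 1`. Since `u` maximizes `m` on
the unit ball and `f' x` is within `e` of `m`, the slope `f' x u` is at least `‖m‖ - e`, so the
step length `η = a / L` minimizes the resulting quadratic in `η`, with value `-a ^ 2 / (2 * L)`.
-/

open Set

section

variable {E : Type*} [NormedAddCommGroup E] [NormedSpace ℝ E]

theorem le_add_fderiv_add_of_lipschitz_fderiv {f : E → ℝ} {f' : E → E →L[ℝ] ℝ} {L : ℝ}
    (hf : ∀ y, HasFDerivAt f (f' y) y) (x : E) (hf' : ∀ y, ‖f' y - f' x‖ ≤ L * ‖y - x‖)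
    (v : E) : f (x + v) ≤ f x + f' x v + L / 2 * ‖v‖ ^ 2 := by
  -- The gap between `f` on the ray `x + t • v` and its quadratic majorant has derivative `≤ 0`
  -- for `t > 0`, since `f'` grows at most linearly in `t` along the ray.
  set φ : ℝ → ℝ := fun t ↦ f (x + t • v) - t * f' x v - L / 2 * t ^ 2 * ‖v‖ ^ 2
  have hφ : ∀ t, HasDerivAt φ (f' (x + t • v) v - f' x v - L * t * ‖v‖ ^ 2) t := by
    intro t
    have hray : HasDerivAt (fun t : ℝ ↦ x + t • v) v t := by
      simpa using ((hasDerivAt_id t).smul_const v).const_add x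
    refine ((((hf _).comp_hasDerivAt t hray).sub ((hasDerivAt_id t).mul_const (f' x v))).sub
      (((hasDerivAt_pow 2 t).const_mul (L / 2)).mul_const (‖v‖ ^ 2))).congr_deriv
      (by push_cast; ring)
  have hφ_anti : AntitoneOn φ (Ici 0) := by
    refine antitoneOn_of_hasDerivWithinAt_nonpos (convex_Ici 0)
      (fun t _ ↦ (hφ t).continuousAt.continuousWithinAt) (fun t _ ↦ (hφ t).hasDerivWithinAt) ?_
    intro t ht
    rw [interior_Ici, mem_Ioi] at ht
    have hgrowth : (f' (x + t • v) - f' x) v ≤ L * t * ‖v‖ ^ 2 :=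
      calc (f' (x + t • v) - f' x) v
          ≤ ‖f' (x + t • v) - f' x‖ * ‖v‖ := (le_abs_self _).trans ((f' _ - f' x).le_opNorm v)
        _ ≤ L * ‖t • v‖ * ‖v‖ := by
          gcongr
          simpa using hf' (x + t • v)
        _ = L * t * ‖v‖ ^ 2 := by rw [norm_smul, Real.norm_of_nonneg ht.le]; ring
    rw [sub_apply] at hgrowth
    linarith
  have hφ_one := hφ_anti self_mem_Ici (zero_le_one' ℝ) zero_le_one
  simp only [φ, zero_smul, add_zero, zero_mul, sub_zero, one_smul, one_mul, one_pow] at hφ_one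
  linarith

theorem sub_opNorm_sub_le_apply {m g : E →L[ℝ] ℝ} {u : E} (hu : ‖u‖ ≤ 1) (hmu : m u = ‖m‖) :
    ‖m‖ - ‖g - m‖ ≤ g u := by
  have : |(g - m) u| ≤ ‖g - m‖ :=
    ((g - m).le_opNorm u).trans (mul_le_of_le_one_right (norm_nonneg _) hu)
  rw [sub_apply] at this
  linarith [neg_abs_le (g u - m u)]

theorem le_sub_mul_fderiv_add_of_lipschitz_fderiv {f : E → ℝ} {f' : E → E →L[ℝ] ℝ} {L : ℝ}
    (hL : 0 ≤ L) (hf : ∀ y, HasFDerivAt f (f' y) y) (x : E)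
    (hf' : ∀ y, ‖f' y - f' x‖ ≤ L * ‖y - x‖) {u : E} (hu : ‖u‖ ≤ 1) (η : ℝ) :
    f (x - η • u) ≤ f x - η * f' x u + L / 2 * η ^ 2 := by
  have hnorm : ‖η • u‖ ^ 2 ≤ η ^ 2 := by
    rw [norm_smul, mul_pow, Real.norm_eq_abs, sq_abs]
    exact mul_le_of_le_one_right (sq_nonneg η) (pow_le_one₀ (norm_nonneg u) hu)
  have := le_add_fderiv_add_of_lipschitz_fderiv hf x hf' (-(η • u))
  rw [← sub_eq_add_neg, map_neg, map_smul, smul_eq_mul, norm_neg] at this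
  have hquad : L / 2 * ‖η • u‖ ^ 2 ≤ L / 2 * η ^ 2 := by gcongr
  linarith

end

theorem stmt_6 {E : Type*} [NormedAddCommGroup E] [NormedSpace ℝ E]
    (f : E → ℝ) (f' : E → (E →L[ℝ] ℝ)) (L : ℝ) (hL : 0 < L)
    (hdiff : ∀ x, HasFDerivAt f (f' x) x)
    (hlip : ∀ x y, ‖f' y - f' x‖ ≤ L * ‖y - x‖)
    (x : E) (m : E →L[ℝ] ℝ) (e a η : ℝ) (u : E) (xp : E)
    (he : e = ‖f' x - m‖)
    (ha : a = max (‖m‖ - e) 0)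
    (hu_norm : ‖u‖ ≤ 1) (hu_max : m u = ‖m‖)
    (hη : η = a / L)
    (hxp : xp = x - η • u) :
    f xp ≤ f x - a ^ 2 / (2 * L) := by
  have hdescent := hxp ▸ le_sub_mul_fderiv_add_of_lipschitz_fderiv hL.le hdiff x (hlip x) hu_norm η
  have hη0 : 0 ≤ η := hη ▸ div_nonneg (ha ▸ le_max_right _ _) hL.le
  -- `u` is a certified ascent direction: `a ≤ f' x u` unless `a = 0`, in which case `η = 0`.
  have hslope : η * a ≤ η * f' x u := by
    rcases max_choice (‖m‖ - e) 0 with h | h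
    · rw [ha, h]
      exact mul_le_mul_of_nonneg_left (he ▸ sub_opNorm_sub_le_apply hu_norm hu_max) hη0
    · simp [hη, ha, h]
  have hη_opt : -η * a + L / 2 * η ^ 2 = -(a ^ 2 / (2 * L)) := by
    rw [hη]; field_simp; ring
  linarith
end

section
/- With q = 1 − α ∈ (0,1), the Scale-Calibrated Muon momentum error satisfies e_{k+1} ≤ q·(e_k + a_k) for all k ≥ 0, where e_k = ‖∇f(x_k) − m_{k+1}‖_*, a_k = max{‖m_{k+1}‖_* − e_k, 0}, and the iterates satisfy ‖x_{k+1} − x_k‖ ≤ a_k/L with m_{k+2} = q·m_{k+1} + α·∇f(x_{k+1}). -/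
theorem norm_sub_ema_le {V : Type*} [SeminormedAddCommGroup V] [NormedSpace ℝ V]
    {q : ℝ} (hq : 0 ≤ q) (g g' m : V) :
    ‖g' - (q • m + (1 - q) • g')‖ ≤ q * (‖g - m‖ + ‖g' - g‖) := by
  have hcontract : g' - (q • m + (1 - q) • g') = q • (g' - m) := by
    rw [sub_smul, one_smul, smul_sub]
    abel
  calc ‖g' - (q • m + (1 - q) • g')‖ = q * ‖g' - m‖ := by
        rw [hcontract, norm_smul, Real.norm_of_nonneg hq]
    _ ≤ q * (‖g - m‖ + ‖g' - g‖) := by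
        gcongr
        rw [add_comm]
        exact norm_sub_le_norm_sub_add_norm_sub g' g m

theorem stmt_7_general {E : Type*} [NormedAddCommGroup E] [NormedSpace ℝ E]
    (f' : E → (E →L[ℝ] ℝ)) (L : ℝ) (hL : 0 < L)
    (hlip : ∀ x y, ‖f' y - f' x‖ ≤ L * ‖y - x‖)
    (α q : ℝ) (hα : α ∈ Set.Ioo (0:ℝ) 1) (hq : q = 1 - α)
    (x : ℕ → E) (m : ℕ → (E →L[ℝ] ℝ)) (e a : ℕ → ℝ)
    (he : ∀ k, e k = ‖f' (x k) - m (k + 1)‖)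
    (hstep : ∀ k, ‖x (k + 1) - x k‖ ≤ a k / L)
    (hm : ∀ k, m (k + 2) = q • m (k + 1) + α • f' (x (k + 1))) :
    ∀ k, e (k + 1) ≤ q * (e k + a k) := by
  intro k
  have hq0 : 0 ≤ q := by linarith [hα.2]
  have hgrad : ‖f' (x (k + 1)) - f' (x k)‖ ≤ a k :=
    calc ‖f' (x (k + 1)) - f' (x k)‖ ≤ L * ‖x (k + 1) - x k‖ := hlip _ _
      _ ≤ L * (a k / L) := by gcongr; exact hstep k
      _ = a k := mul_div_cancel₀ _ hL.ne'
  have hα_eq : α = 1 - q := by linarith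
  calc e (k + 1) = ‖f' (x (k + 1)) - (q • m (k + 1) + (1 - q) • f' (x (k + 1)))‖ := by
        rw [he (k + 1), ← hα_eq, ← hm k]
    _ ≤ q * (‖f' (x k) - m (k + 1)‖ + ‖f' (x (k + 1)) - f' (x k)‖) :=
        norm_sub_ema_le hq0 _ _ _
    _ ≤ q * (e k + a k) := by rw [← he k]; gcongr

theorem stmt_7 {E : Type*} [NormedAddCommGroup E] [NormedSpace ℝ E]
    (f : E → ℝ) (f' : E → (E →L[ℝ] ℝ)) (L : ℝ) (hL : 0 < L)
    (hdiff : ∀ x, HasFDerivAt f (f' x) x)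
    (hlip : ∀ x y, ‖f' y - f' x‖ ≤ L * ‖y - x‖)
    (α q : ℝ) (hα : α ∈ Set.Ioo (0:ℝ) 1) (hq : q = 1 - α)
    (x : ℕ → E) (m : ℕ → (E →L[ℝ] ℝ)) (e a : ℕ → ℝ)
    (he : ∀ k, e k = ‖f' (x k) - m (k + 1)‖)
    (ha : ∀ k, a k = max (‖m (k + 1)‖ - e k) 0)
    (hstep : ∀ k, ‖x (k + 1) - x k‖ ≤ a k / L)
    (hm : ∀ k, m (k + 2) = q • m (k + 1) + α • f' (x (k + 1))) :
    ∀ k, e (k + 1) ≤ q * (e k + a k) :=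
  stmt_7_general f' L hL hlip α q hα hq x m e a he hstep hm
end

section
/- Let α ∈ (0,1), q = 1−α, γ = 1−q², A = γ/(16q²), and χ = min{3/8, γ³/(16q²)}. For nonnegative reals a, e, e' with e' ≤ q(e + a), and any L > 0 and Δ' ≤ Δ − a²/(2L) (with Δ, Δ' ∈ ℝ), the Lyapunov values Φ = Δ + (A/L)e² and Φ' = Δ' + (A/L)(e')² satisfy Φ' ≤ Φ − (χ/L)(a² + e²). -/
/-!
Along one step the error term `e` contracts by the factor `q` while the descent in `Δ` gains
`a² / (2L)`.  With the weight `A = γ / (16 q²)` the gain pays for the growth of `(A / L) e'²`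
up to a remainder that, after Young's inequality `(γ/8) a e ≤ a²/16 + γ² e²/16`, is at least
`((3/8) a² + γ³/(16 q²) e²) / L ≥ (χ / L) (a² + e²)`.
-/

theorem lyapunov_gap_lower_bound {q γ : ℝ} (hq : q ≠ 0) (hqγ : q ^ 2 + γ = 1) (a e : ℝ) :
    3 / 8 * a ^ 2 + γ ^ 3 / (16 * q ^ 2) * e ^ 2
      ≤ a ^ 2 / 2 + γ / (16 * q ^ 2) * (e ^ 2 - (q * (e + a)) ^ 2) := by
  have young : γ / 8 * (a * e) ≤ a ^ 2 / 16 + γ ^ 2 * e ^ 2 / 16 := by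
    nlinarith [sq_nonneg (a - γ * e)]
  have hAq : γ / (16 * q ^ 2) * q ^ 2 = γ / 16 := by
    field_simp
  have hA : γ / (16 * q ^ 2) = γ / 16 + γ ^ 2 / (16 * q ^ 2) := by
    field_simp
    linear_combination (-γ) * hqγ
  have hγ3 : γ ^ 3 / (16 * q ^ 2) = γ ^ 2 / (16 * q ^ 2) - γ ^ 2 / 16 := by
    field_simp
    linear_combination γ ^ 2 * hqγ
  have hsplit : γ / (16 * q ^ 2) * (e ^ 2 - (q * (e + a)) ^ 2)
      = γ / 16 * e ^ 2 + γ ^ 2 / (16 * q ^ 2) * e ^ 2 - γ / 16 * (e + a) ^ 2 := by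
    linear_combination e ^ 2 * hA - (e + a) ^ 2 * hAq
  rw [hsplit, hγ3]
  nlinarith [mul_nonneg (sq_nonneg q) (sq_nonneg a)]

theorem mul_add_le_of_le_min {χ u v x y : ℝ} (hχ : χ ≤ min u v) (hx : 0 ≤ x) (hy : 0 ≤ y) :
    χ * (x + y) ≤ u * x + v * y := by
  have hu : χ * x ≤ u * x := mul_le_mul_of_nonneg_right (hχ.trans (min_le_left u v)) hx
  have hv : χ * y ≤ v * y := mul_le_mul_of_nonneg_right (hχ.trans (min_le_right u v)) hy
  linarith

theorem lyapunov_step {A χ L Δ Δ' a e e' r : ℝ} (hA : 0 ≤ A) (hL : 0 < L)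
    (hdesc : Δ' ≤ Δ - a ^ 2 / (2 * L)) (hrec : e' ^ 2 ≤ r ^ 2)
    (hgap : χ * (a ^ 2 + e ^ 2) ≤ a ^ 2 / 2 + A * (e ^ 2 - r ^ 2)) :
    Δ' + A / L * e' ^ 2 ≤ Δ + A / L * e ^ 2 - χ / L * (a ^ 2 + e ^ 2) := by
  have hgap' : A * e' ^ 2 + χ * (a ^ 2 + e ^ 2) ≤ a ^ 2 / 2 + A * e ^ 2 := by
    linarith [mul_le_mul_of_nonneg_left hrec hA]
  have hscaled := mul_le_mul_of_nonneg_left hgap' (inv_nonneg.2 hL.le)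
  simp only [div_eq_mul_inv, mul_inv] at hdesc ⊢
  linarith

theorem stmt_9_general (α : ℝ) (hα : α ∈ Set.Ioo (0:ℝ) 1)
    (q γ A χ : ℝ) (hq : q = 1 - α) (hγ : γ = 1 - q ^ 2)
    (hA : A = γ / (16 * q ^ 2))
    (hχ : χ = min (3 / 8) (γ ^ 3 / (16 * q ^ 2)))
    (a e e' : ℝ) (he' : 0 ≤ e')
    (hrec : e' ≤ q * (e + a))
    (L : ℝ) (hL : 0 < L)
    (Δ Δ' : ℝ) (hdesc : Δ' ≤ Δ - a ^ 2 / (2 * L))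
    (Φ Φ' : ℝ)
    (hΦ : Φ = Δ + (A / L) * e ^ 2)
    (hΦ' : Φ' = Δ' + (A / L) * e' ^ 2) :
    Φ' ≤ Φ - (χ / L) * (a ^ 2 + e ^ 2) := by
  obtain ⟨hα0, hα1⟩ := hα
  have hq0 : 0 < q := by linarith
  have hq1 : q < 1 := by linarith
  subst hΦ hΦ' hχ hA hγ
  have hA0 : 0 ≤ (1 - q ^ 2) / (16 * q ^ 2) := div_nonneg (by nlinarith) (by positivity)
  refine lyapunov_step hA0 hL hdesc (pow_le_pow_left₀ he' hrec 2) ?_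
  calc min (3 / 8) ((1 - q ^ 2) ^ 3 / (16 * q ^ 2)) * (a ^ 2 + e ^ 2)
      ≤ 3 / 8 * a ^ 2 + (1 - q ^ 2) ^ 3 / (16 * q ^ 2) * e ^ 2 :=
        mul_add_le_of_le_min le_rfl (sq_nonneg a) (sq_nonneg e)
    _ ≤ _ := lyapunov_gap_lower_bound hq0.ne' (by ring) a e

theorem stmt_9 (α : ℝ) (hα : α ∈ Set.Ioo (0:ℝ) 1)
    (q γ A χ : ℝ) (hq : q = 1 - α) (hγ : γ = 1 - q ^ 2)
    (hA : A = γ / (16 * q ^ 2))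
    (hχ : χ = min (3 / 8) (γ ^ 3 / (16 * q ^ 2)))
    (a e e' : ℝ) (ha : 0 ≤ a) (he : 0 ≤ e) (he' : 0 ≤ e')
    (hrec : e' ≤ q * (e + a))
    (L : ℝ) (hL : 0 < L)
    (Δ Δ' : ℝ) (hdesc : Δ' ≤ Δ - a ^ 2 / (2 * L))
    (Φ Φ' : ℝ)
    (hΦ : Φ = Δ + (A / L) * e ^ 2)
    (hΦ' : Φ' = Δ' + (A / L) * e' ^ 2) :
    Φ' ≤ Φ - (χ / L) * (a ^ 2 + e ^ 2) :=
  stmt_9_general α hα q γ A χ hq hγ hA hχ a e e' he' hrec L hL Δ Δ' hdesc Φ Φ' hΦ hΦ'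
end

section
/- Let f : E → ℝ be star-convex toward a global minimizer x⋆, let D = ‖x₀ − x⋆‖, and let gradients g_i = ∇f(x_i) and nonnegative weights ω_i be given. Define S_{k+1} = ∑_{i=0}^{k} ω_i g_i and B_{k+1} = −∑_{i=0}^{k} ω_i ⟨g_i, x_i − x₀⟩. Then B_{k+1} ≤ D·‖S_{k+1}‖_*; consequently, if ‖S_{k+1}‖_* > 0 then max{B_{k+1}, 0}/‖S_{k+1}‖_* ≤ D. -/
/-!
Star-convexity toward the minimizer `x⋆` together with `f x⋆ ≤ f y` gives `0 ≤ ⟨g_i, x_i - x⋆⟩`.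
Splitting `x_i - x⋆ = (x_i - x₀) + (x₀ - x⋆)` and summing with the weights `ω_i ≥ 0` yields
`B ≤ ⟨S, x₀ - x⋆⟩`, which Hölder bounds by `D · ‖S‖`.
-/

open Finset

lemma neg_sum_mul_apply_sub_le_sum_smul_apply {E ι : Type*} [NormedAddCommGroup E]
    [NormedSpace ℝ E] (s : Finset ι) (g : ι → E →L[ℝ] ℝ) (x : ι → E) (x0 xstar : E)
    (ω : ι → ℝ) (hω : ∀ i ∈ s, 0 ≤ ω i) (hg : ∀ i ∈ s, 0 ≤ g i (x i - xstar)) :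
    -∑ i ∈ s, ω i * g i (x i - x0) ≤ (∑ i ∈ s, ω i • g i) (x0 - xstar) := by
  rw [FunLike.coe_sum, Finset.sum_apply, neg_le_iff_add_nonneg, ← sum_add_distrib]
  refine sum_nonneg fun i hi => ?_
  have hsplit : g i (x i - xstar) = g i (x i - x0) + g i (x0 - xstar) := by
    rw [← map_add, sub_add_sub_cancel]
  rw [_root_.smul_apply, smul_eq_mul, add_comm, ← mul_add, ← hsplit]
  exact mul_nonneg (hω i hi) (hg i hi)

lemma max_div_le_of_le_mul {B D s : ℝ} (hB : B ≤ D * s) (hD : 0 ≤ D) (hs : 0 < s) :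
    max B 0 / s ≤ D := by
  rw [div_le_iff₀ hs]
  exact max_le hB (mul_nonneg hD hs.le)

theorem stmt_11_general {E : Type*} [NormedAddCommGroup E] [NormedSpace ℝ E]
    (f : E → ℝ) (f' : E → (E →L[ℝ] ℝ))
    (xstar : E) (hmin : ∀ y, f xstar ≤ f y)
    (hstar : ∀ y, f y - f xstar ≤ (f' y) (y - xstar))
    (x : ℕ → E) (x0 : E)
    (D : ℝ) (hD : D = ‖x0 - xstar‖)
    (ω : ℕ → ℝ) (hω : ∀ i, 0 ≤ ω i)
    (k : ℕ) (S : E →L[ℝ] ℝ) (B : ℝ)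
    (hS : S = ∑ i ∈ Finset.range (k + 1), ω i • f' (x i))
    (hB : B = -∑ i ∈ Finset.range (k + 1), ω i * (f' (x i)) (x i - x0)) :
    B ≤ D * ‖S‖ ∧ (0 < ‖S‖ → max B 0 / ‖S‖ ≤ D) := by
  have hBS : B ≤ S (x0 - xstar) := by
    rw [hB, hS]
    exact neg_sum_mul_apply_sub_le_sum_smul_apply _ _ _ _ _ _ (fun i _ => hω i)
      fun i _ => by linarith [hmin (x i), hstar (x i)]
  have hBD : B ≤ D * ‖S‖ :=
    calc B ≤ S (x0 - xstar) := hBS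
      _ ≤ ‖S‖ * ‖x0 - xstar‖ := (le_abs_self _).trans (S.le_opNorm _)
      _ = D * ‖S‖ := by rw [hD, mul_comm]
  exact ⟨hBD, max_div_le_of_le_mul hBD (hD ▸ norm_nonneg _)⟩

theorem stmt_11 {E : Type*} [NormedAddCommGroup E] [NormedSpace ℝ E]
    (f : E → ℝ) (f' : E → (E →L[ℝ] ℝ))
    (hdiff : ∀ y, HasFDerivAt f (f' y) y)
    (xstar : E) (hmin : ∀ y, f xstar ≤ f y)
    (hstar : ∀ y, f y - f xstar ≤ (f' y) (y - xstar))
    (x : ℕ → E) (x0 : E) (hx0 : x 0 = x0)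
    (D : ℝ) (hD : D = ‖x0 - xstar‖)
    (ω : ℕ → ℝ) (hω : ∀ i, 0 ≤ ω i)
    (k : ℕ) (S : E →L[ℝ] ℝ) (B : ℝ)
    (hS : S = ∑ i ∈ Finset.range (k + 1), ω i • f' (x i))
    (hB : B = -∑ i ∈ Finset.range (k + 1), ω i * (f' (x i)) (x i - x0)) :
    B ≤ D * ‖S‖ ∧ (0 < ‖S‖ → max B 0 / ‖S‖ ≤ D) :=
  stmt_11_general f f' xstar hmin hstar x x0 D hD ω hω k S B hS hB
end

section
/- Let f : E → ℝ be differentiable with ‖∇f(y) − ∇f(x)‖_* ≤ L‖y − x‖, let iterates satisfy ‖x_i − x_{i−1}‖ = a_i, and let m_{k+1} = (1−α)m_k + α∇f(x_k) with m_0 = ∇f(x_0), e_k = ∇f(x_k) − m_{k+1}, q = 1−α. Then e_0 = 0 and for k ≥ 1, ‖e_k‖_* ≤ qL·∑_{i=1}^{k} q^{k−i}·a_i. -/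
/-!
Since `m (k + 2) = q m (k + 1) + α ∇f(x (k + 1))`, the error satisfies
`e (k + 1) = q (∇f(x (k + 1)) - ∇f(x k) + e k)`, so `‖e (k + 1)‖ ≤ q (L a (k + 1) + ‖e k‖)`;
unrolling this scalar recursion from `e 0 = 0` gives the geometric sum.
-/

open Finset

lemma momentum_error_succ {V : Type*} [AddCommGroup V] [Module ℝ V] {α : ℝ} {g m : ℕ → V}
    (hm : ∀ k, m (k + 1) = (1 - α) • m k + α • g k) (k : ℕ) :
    g (k + 1) - m (k + 2) = (1 - α) • (g (k + 1) - g k + (g k - m (k + 1))) := by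
  rw [hm (k + 1)]
  module

lemma sum_Icc_one_pow_sub_mul_succ (q : ℝ) (b : ℕ → ℝ) (n : ℕ) :
    ∑ i ∈ Icc 1 (n + 1), q ^ (n + 1 - i) * b i
      = b (n + 1) + q * ∑ i ∈ Icc 1 n, q ^ (n - i) * b i := by
  rw [sum_Icc_succ_top (by omega), Nat.sub_self, pow_zero, one_mul, add_comm, mul_sum]
  congr 1
  refine sum_congr rfl fun i hi => ?_
  rw [Nat.sub_add_comm (mem_Icc.mp hi).2, pow_succ]
  ring

lemma le_mul_sum_Icc_pow_of_le_mul_add {q : ℝ} (hq : 0 ≤ q) {u b : ℕ → ℝ} (h0 : u 0 ≤ 0)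
    (hsucc : ∀ k, u (k + 1) ≤ q * (b (k + 1) + u k)) (k : ℕ) :
    u k ≤ q * ∑ i ∈ Icc 1 k, q ^ (k - i) * b i := by
  induction k with
  | zero => simpa using h0
  | succ n ih =>
    calc u (n + 1) ≤ q * (b (n + 1) + u n) := hsucc n
      _ ≤ q * (b (n + 1) + q * ∑ i ∈ Icc 1 n, q ^ (n - i) * b i) := by gcongr
      _ = q * ∑ i ∈ Icc 1 (n + 1), q ^ (n + 1 - i) * b i := by
        rw [sum_Icc_one_pow_sub_mul_succ]

theorem stmt_13_general {E : Type*} [NormedAddCommGroup E] [NormedSpace ℝ E]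
    (f' : E → (E →L[ℝ] ℝ)) (L : ℝ)
    (hlip : ∀ x y, ‖f' y - f' x‖ ≤ L * ‖y - x‖)
    (α q : ℝ) (hα : α ∈ Set.Ioo (0:ℝ) 1) (hq : q = 1 - α)
    (x : ℕ → E) (m : ℕ → (E →L[ℝ] ℝ)) (a : ℕ → ℝ) (e : ℕ → (E →L[ℝ] ℝ))
    (ha : ∀ i, 1 ≤ i → a i = ‖x i - x (i - 1)‖)
    (hm0 : m 0 = f' (x 0))
    (hm : ∀ k, m (k + 1) = (1 - α) • m k + α • f' (x k))
    (he : ∀ k, e k = f' (x k) - m (k + 1)) :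
    e 0 = 0 ∧
    ∀ k, 1 ≤ k → ‖e k‖ ≤ q * L * ∑ i ∈ Finset.Icc 1 k, q ^ (k - i) * a i := by
  have hq0 : 0 ≤ q := by linarith [hα.2]
  have he0 : e 0 = 0 := by
    rw [he 0, hm 0, hm0, ← add_smul, sub_add_cancel, one_smul, sub_self]
  refine ⟨he0, fun k _ => ?_⟩
  have hstep : ∀ k, ‖e (k + 1)‖ ≤ q * (L * a (k + 1) + ‖e k‖) := fun k => by
    rw [he, he, momentum_error_succ hm, ← hq, norm_smul, Real.norm_of_nonneg hq0]
    gcongr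
    refine (norm_add_le _ _).trans (add_le_add_left ?_ _)
    simpa [ha (k + 1) le_add_self] using hlip (x k) (x (k + 1))
  calc ‖e k‖ ≤ q * ∑ i ∈ Icc 1 k, q ^ (k - i) * (L * a i) :=
        le_mul_sum_Icc_pow_of_le_mul_add hq0 (u := (‖e ·‖)) (by simp [he0]) hstep k
    _ = q * L * ∑ i ∈ Icc 1 k, q ^ (k - i) * a i := by
        simp only [mul_sum]
        exact sum_congr rfl fun i _ => by ring

theorem stmt_13 {E : Type*} [NormedAddCommGroup E] [NormedSpace ℝ E]
    (f : E → ℝ) (f' : E → (E →L[ℝ] ℝ)) (L : ℝ)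
    (hdiff : ∀ x, HasFDerivAt f (f' x) x)
    (hlip : ∀ x y, ‖f' y - f' x‖ ≤ L * ‖y - x‖)
    (α q : ℝ) (hα : α ∈ Set.Ioo (0:ℝ) 1) (hq : q = 1 - α)
    (x : ℕ → E) (m : ℕ → (E →L[ℝ] ℝ)) (a : ℕ → ℝ) (e : ℕ → (E →L[ℝ] ℝ))
    (ha : ∀ i, 1 ≤ i → a i = ‖x i - x (i - 1)‖)
    (hm0 : m 0 = f' (x 0))
    (hm : ∀ k, m (k + 1) = (1 - α) • m k + α • f' (x k))
    (he : ∀ k, e k = f' (x k) - m (k + 1)) :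
    e 0 = 0 ∧
    ∀ k, 1 ≤ k → ‖e k‖ ≤ q * L * ∑ i ∈ Finset.Icc 1 k, q ^ (k - i) * a i :=
  stmt_13_general f' L hlip α q hα hq x m a e ha hm0 hm he
end

section
/- Let 0 < q < r < 1 and nonnegative reals a_1, …, a_T be given, and suppose ‖e_0‖ = 0 and ‖e_k‖ ≤ qL·∑_{i=1}^{k} q^{k−i} a_i for k ≥ 1, with L > 0. Then ∑_{k=0}^{T−1} r^{T−1−k}‖e_k‖ ≤ (qL/(r−q))·(1/(1−r))^{1/2}·(∑_{i=1}^{T} r^{T−i} a_i²)^{1/2}. -/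
/-!
Bounding each `‖e k‖` by its hypothesis and exchanging the order of summation, the coefficient of
`a i` becomes `∑_{i ≤ k < T} r ^ (T - 1 - k) q ^ (k - i)`, a two-variable geometric sum which is at
most `r ^ (T - i) / (r - q)` because `q < r`. Cauchy–Schwarz with weights `r ^ (T - i)`, whose total
is at most `1 / (1 - r)`, then turns `∑ r ^ (T - i) a i` into the square-root bound.
-/

open Finset

lemma geom_sum₂_le_div_sub {q r : ℝ} (hq : 0 ≤ q) (hqr : q < r) (n : ℕ) :
    ∑ j ∈ range n, q ^ j * r ^ (n - 1 - j) ≤ r ^ n / (r - q) := by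
  rw [le_div_iff₀ (sub_pos.2 hqr)]
  have h := geom_sum₂_mul q r n
  nlinarith [pow_nonneg hq n]

lemma sum_Ico_pow_mul_pow_le {q r : ℝ} (hq : 0 ≤ q) (hqr : q < r) (i n : ℕ) :
    ∑ k ∈ Ico i n, r ^ (n - 1 - k) * q ^ (k - i) ≤ r ^ (n - i) / (r - q) := by
  rw [sum_Ico_eq_sum_range]
  calc ∑ j ∈ range (n - i), r ^ (n - 1 - (i + j)) * q ^ (i + j - i)
      = ∑ j ∈ range (n - i), q ^ j * r ^ (n - i - 1 - j) := by
        refine sum_congr rfl fun j _ => ?_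
        rw [mul_comm, Nat.add_sub_cancel_left, show n - 1 - (i + j) = n - i - 1 - j by omega]
    _ ≤ r ^ (n - i) / (r - q) := geom_sum₂_le_div_sub hq hqr _

lemma sum_Icc_pow_sub_le {r : ℝ} (hr₀ : 0 ≤ r) (hr₁ : r < 1) (T : ℕ) :
    ∑ i ∈ Icc 1 T, r ^ (T - i) ≤ 1 / (1 - r) := by
  rw [← Ico_add_one_right_eq_Icc, sum_Ico_reflect (fun j => r ^ j) 1 le_rfl, Nat.sub_self,
    Nat.add_sub_cancel]
  simpa using geom_sum_Ico_le_of_lt_one (m := 0) (n := T) hr₀ hr₁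

lemma sum_mul_le_sqrt_sum_mul_sqrt_sum_mul_sq {ι : Type*} (s : Finset ι) {w b : ι → ℝ}
    (hw : ∀ i ∈ s, 0 ≤ w i) :
    ∑ i ∈ s, w i * b i ≤ √(∑ i ∈ s, w i) * √(∑ i ∈ s, w i * b i ^ 2) := by
  rw [← Real.sqrt_mul (sum_nonneg hw)]
  exact Real.le_sqrt_of_sq_le (sum_sq_le_sum_mul_sum_of_sq_le_mul s hw
    (fun i hi => mul_nonneg (hw i hi) (sq_nonneg _)) fun i _ => le_of_eq (by ring))

lemma sum_pow_mul_sum_geom_conv_le {q r : ℝ} (hq : 0 ≤ q) (hqr : q < r) {a : ℕ → ℝ}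
    (ha : ∀ i, 0 ≤ a i) (T : ℕ) :
    ∑ k ∈ range T, r ^ (T - 1 - k) * ∑ i ∈ Icc 1 k, q ^ (k - i) * a i
      ≤ (∑ i ∈ Icc 1 T, r ^ (T - i) * a i) / (r - q) := by
  have hswap : ∑ k ∈ range T, ∑ i ∈ Icc 1 k, r ^ (T - 1 - k) * (q ^ (k - i) * a i)
      = ∑ i ∈ Icc 1 T, ∑ k ∈ Ico i T, r ^ (T - 1 - k) * (q ^ (k - i) * a i) :=
    sum_comm' fun k i => by simp only [mem_range, mem_Icc, mem_Ico]; omega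
  simp_rw [mul_sum, hswap, sum_div]
  refine sum_le_sum fun i _ => ?_
  calc ∑ k ∈ Ico i T, r ^ (T - 1 - k) * (q ^ (k - i) * a i)
      = (∑ k ∈ Ico i T, r ^ (T - 1 - k) * q ^ (k - i)) * a i := by
        rw [sum_mul]; simp_rw [mul_assoc]
    _ ≤ r ^ (T - i) / (r - q) * a i :=
        mul_le_mul_of_nonneg_right (sum_Ico_pow_mul_pow_le hq hqr i T) (ha i)
    _ = r ^ (T - i) * a i / (r - q) := div_mul_eq_mul_div _ _ _

theorem stmt_14_general {F : Type*} [NormedAddCommGroup F]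
    (q r L : ℝ) (hq : 0 < q) (hqr : q < r) (hr : r < 1) (hL : 0 < L)
    (T : ℕ) (a : ℕ → ℝ) (hanonneg : ∀ i, 0 ≤ a i)
    (e : ℕ → F) (he0 : ‖e 0‖ = 0)
    (hek : ∀ k, 1 ≤ k → ‖e k‖ ≤ q * L * ∑ i ∈ Finset.Icc 1 k, q ^ (k - i) * a i) :
    ∑ k ∈ Finset.range T, r ^ (T - 1 - k) * ‖e k‖
      ≤ (q * L / (r - q)) * Real.sqrt (1 / (1 - r))
          * Real.sqrt (∑ i ∈ Finset.Icc 1 T, r ^ (T - i) * (a i) ^ 2) := by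
  have hr₀ : 0 ≤ r := hq.le.trans hqr.le
  have hrq : 0 < r - q := sub_pos.2 hqr
  have he : ∀ k, ‖e k‖ ≤ q * L * ∑ i ∈ Icc 1 k, q ^ (k - i) * a i := by
    rintro (_ | k)
    · simp [he0]
    · exact hek _ k.succ_pos
  have hcs := sum_mul_le_sqrt_sum_mul_sqrt_sum_mul_sq (Icc 1 T) (b := a)
    fun i _ => pow_nonneg hr₀ (T - i)
  calc ∑ k ∈ range T, r ^ (T - 1 - k) * ‖e k‖
      ≤ ∑ k ∈ range T, r ^ (T - 1 - k) * (q * L * ∑ i ∈ Icc 1 k, q ^ (k - i) * a i) := by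
        gcongr with k; exact he k
    _ = q * L * ∑ k ∈ range T, r ^ (T - 1 - k) * ∑ i ∈ Icc 1 k, q ^ (k - i) * a i := by
        rw [mul_sum]; simp_rw [mul_left_comm]
    _ ≤ q * L * ((∑ i ∈ Icc 1 T, r ^ (T - i) * a i) / (r - q)) := by
        gcongr; exact sum_pow_mul_sum_geom_conv_le hq.le hqr hanonneg T
    _ ≤ q * L * (√(1 / (1 - r)) * √(∑ i ∈ Icc 1 T, r ^ (T - i) * a i ^ 2) / (r - q)) := by
        gcongr
        exact hcs.trans (by gcongr; exact sum_Icc_pow_sub_le hr₀ hr T)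
    _ = _ := by ring

theorem stmt_14 {F : Type*} [NormedAddCommGroup F]
    (q r L : ℝ) (hq : 0 < q) (hqr : q < r) (hr : r < 1) (hL : 0 < L)
    (T : ℕ) (hT : 1 ≤ T) (a : ℕ → ℝ) (hanonneg : ∀ i, 0 ≤ a i)
    (e : ℕ → F) (he0 : ‖e 0‖ = 0)
    (hek : ∀ k, 1 ≤ k → ‖e k‖ ≤ q * L * ∑ i ∈ Finset.Icc 1 k, q ^ (k - i) * a i) :
    ∑ k ∈ Finset.range T, r ^ (T - 1 - k) * ‖e k‖
      ≤ (q * L / (r - q)) * Real.sqrt (1 / (1 - r))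
          * Real.sqrt (∑ i ∈ Finset.Icc 1 T, r ^ (T - i) * (a i) ^ 2) :=
  stmt_14_general q r L hq hqr hr hL T a hanonneg e he0 hek
end
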